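/- arXiv:2401.10236 — 2 statements merged into one kernel-verified Lean document; each statement's English description precedes it below -/
import Mathlib

section
/- If P and Q are symmetric positive definite matrices, then there exists an invertible matrix T such that T P Tᵀ = (T⁻¹)ᵀ Q T⁻¹ = Σ, where Σ is diagonal with positive entries (the balancing transformation); moreover the diagonal entries of Σ are the square roots of the eigenvalues of PQ. -/
open Matrix

/-!
Write `P = L Lᵀ` with `L = √P`. The transformation `L⁻¹` whitens the pair to `(1, Lᵀ Q L)`; an
orthonormal eigenbasis `U` of the positive definite `Lᵀ Q L` keeps the first Gramian at `1` and
diagonalises the second to `diag μ`; the diagonal scaling `diag (μ^(1/4))` then balances both to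
`diag (√μ)`. Every state transformation `T` replaces `P Q` by `T (P Q) T⁻¹`, so the spectrum of
`P Q` is that of `diag μ`.
-/

namespace Matrix

variable {n R : Type*} [Fintype n] [DecidableEq n] [CommRing R]

def GramianEquiv (P Q P' Q' : Matrix n n R) : Prop :=
  ∃ T : (Matrix n n R)ˣ,
    (T : Matrix n n R) * P * (T : Matrix n n R)ᵀ = P' ∧
      (↑T⁻¹ : Matrix n n R)ᵀ * Q * (↑T⁻¹ : Matrix n n R) = Q'

namespace GramianEquiv

variable {P Q P' Q' P'' Q'' : Matrix n n R}

theorem trans (h : GramianEquiv P Q P' Q') (h' : GramianEquiv P' Q' P'' Q'') :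
    GramianEquiv P Q P'' Q'' := by
  obtain ⟨T, rfl, rfl⟩ := h
  obtain ⟨T', rfl, rfl⟩ := h'
  refine ⟨T' * T, ?_, ?_⟩ <;> simp [transpose_mul, mul_assoc]

theorem spectrum_mul_eq (h : GramianEquiv P Q P' Q') :
    spectrum R (P' * Q') = spectrum R (P * Q) := by
  obtain ⟨T, rfl, rfl⟩ := h
  have hTT : (↑T : Matrix n n R)ᵀ * (↑T⁻¹ : Matrix n n R)ᵀ = 1 := by
    rw [← transpose_mul, Units.inv_mul, transpose_one]
  have hconj : (T : Matrix n n R) * P * (T : Matrix n n R)ᵀ *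
      ((↑T⁻¹ : Matrix n n R)ᵀ * Q * (↑T⁻¹ : Matrix n n R)) =
      (T : Matrix n n R) * (P * Q) * (↑T⁻¹ : Matrix n n R) := by
    simp only [mul_assoc, ← mul_assoc (↑T : Matrix n n R)ᵀ, hTT, one_mul]
  rw [hconj, spectrum.units_conjugate]

theorem posDef_right {P Q P' Q' : Matrix n n ℝ} (h : GramianEquiv P Q P' Q') (hQ : Q.PosDef) :
    Q'.PosDef := by
  obtain ⟨T, -, rfl⟩ := h
  exact (IsUnit.posDef_star_left_conjugate_iff T⁻¹.isUnit).mpr hQ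

end GramianEquiv

theorem gramianEquiv_mul_transpose_left (L : (Matrix n n R)ˣ) (Q : Matrix n n R) :
    GramianEquiv ((L : Matrix n n R) * (L : Matrix n n R)ᵀ) Q 1
      ((L : Matrix n n R)ᵀ * Q * L) := by
  refine ⟨L⁻¹, ?_, by rw [inv_inv]⟩
  rw [← mul_assoc, Units.inv_mul, one_mul, ← transpose_mul, Units.inv_mul, transpose_one]

theorem gramianEquiv_orthogonal {U : Matrix n n R} (hU : Uᵀ * U = 1) (P Q : Matrix n n R) :
    GramianEquiv P Q (Uᵀ * P * U) (Uᵀ * Q * U) :=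
  ⟨⟨Uᵀ, U, hU, mul_eq_one_comm.mp hU⟩, by rw [Units.val_mk, transpose_transpose], rfl⟩

theorem gramianEquiv_diagonal {K : Type*} [Field K] {e a b a' b' : n → K} (he : ∀ i, e i ≠ 0)
    (ha : ∀ i, e i ^ 2 * a i = a' i) (hb : ∀ i, b i = e i ^ 2 * b' i) :
    GramianEquiv (diagonal a) (diagonal b) (diagonal a') (diagonal b') := by
  have hinv : diagonal e * diagonal (fun i => (e i)⁻¹) = 1 := by
    rw [diagonal_mul_diagonal, ← diagonal_one]
    exact congrArg diagonal (funext fun i => mul_inv_cancel₀ (he i))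
  refine ⟨⟨diagonal e, _, hinv, mul_eq_one_comm.mp hinv⟩, ?_, ?_⟩ <;>
    simp only [Units.val_mk, Units.inv_mk, diagonal_transpose, diagonal_mul_diagonal] <;>
    congr 1 <;> funext i
  · rw [← ha, sq]; ring
  · rw [hb]; field_simp [he i]

section

open scoped MatrixOrder

theorem PosDef.exists_eq_mul_transpose {P : Matrix n n ℝ} (hP : P.PosDef) :
    ∃ L : (Matrix n n ℝ)ˣ, P = (L : Matrix n n ℝ) * (L : Matrix n n ℝ)ᵀ := by
  obtain ⟨L, hL⟩ := (CFC.isUnit_sqrt_iff P hP.posSemidef.nonneg).mpr hP.isUnit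
  have hLsymm : (L : Matrix n n ℝ)ᵀ = L := hL ▸ (CFC.sqrt_nonneg P).isSelfAdjoint
  exact ⟨L, by rw [hLsymm, hL, CFC.sqrt_mul_sqrt_self P hP.posSemidef.nonneg]⟩

end

theorem IsHermitian.transpose_eigenvectorUnitary_mul_mul {A : Matrix n n ℝ}
    (hA : A.IsHermitian) :
    (hA.eigenvectorUnitary : Matrix n n ℝ)ᵀ * A * (hA.eigenvectorUnitary : Matrix n n ℝ) =
      diagonal hA.eigenvalues := by
  simpa [star_eq_conjTranspose] using hA.conjStarAlgAut_star_eigenvectorUnitary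

theorem PosDef.exists_gramianEquiv_diagonal {P Q : Matrix n n ℝ} (hP : P.PosDef)
    (hQ : Q.PosDef) :
    ∃ d : n → ℝ, (∀ i, 0 < d i) ∧ GramianEquiv P Q (diagonal d) (diagonal d) := by
  obtain ⟨L, rfl⟩ := hP.exists_eq_mul_transpose
  have hwhiten := gramianEquiv_mul_transpose_left L Q
  have hM := hwhiten.posDef_right hQ
  set U : Matrix n n ℝ := ↑hM.1.eigenvectorUnitary
  have hU : Uᵀ * U = 1 := by
    simpa [star_eq_conjTranspose] using Unitary.coe_star_mul_self hM.1.eigenvectorUnitary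
  have hrotate := gramianEquiv_orthogonal hU 1 ((L : Matrix n n ℝ)ᵀ * Q * L)
  rw [mul_one, hU, hM.1.transpose_eigenvectorUnitary_mul_mul, ← diagonal_one] at hrotate
  set μ := hM.1.eigenvalues
  have hμ : ∀ i, 0 < μ i := hM.eigenvalues_pos
  have hscale : GramianEquiv (diagonal fun _ => 1) (diagonal μ)
      (diagonal fun i => √(μ i)) (diagonal fun i => √(μ i)) := by
    refine gramianEquiv_diagonal (e := fun i => √√(μ i))
      (fun i => by have := hμ i; positivity) (fun i => ?_) (fun i => ?_) <;>
      simp only [Real.sq_sqrt (Real.sqrt_nonneg _), mul_one]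
    exact (Real.mul_self_sqrt (hμ i).le).symm
  exact ⟨_, fun i => Real.sqrt_pos.mpr (hμ i), hwhiten.trans (hrotate.trans hscale)⟩

end Matrix

/-- Balancing transformation: if `P` and `Q` are symmetric positive definite, there is an
invertible `T` with `T P Tᵀ = (T⁻¹)ᵀ Q T⁻¹ = Σ` diagonal with positive entries, and the
diagonal entries of `Σ` are the square roots of the eigenvalues of `P Q`. -/
theorem balancing_transformation_exists {N : ℕ}
    (P Q : Matrix (Fin N) (Fin N) ℝ) (hP : P.PosDef) (hQ : Q.PosDef) :
    ∃ (T : Matrix (Fin N) (Fin N) ℝ) (d : Fin N → ℝ),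
      IsUnit T ∧ (∀ i, 0 < d i) ∧
      T * P * Tᵀ = Matrix.diagonal d ∧
      (T⁻¹)ᵀ * Q * T⁻¹ = Matrix.diagonal d ∧
      spectrum ℝ (P * Q) = Set.range fun i => d i ^ 2 := by
  obtain ⟨d, hd, h⟩ := hP.exists_gramianEquiv_diagonal hQ
  have hspec := h.spectrum_mul_eq
  obtain ⟨T, hTP, hTQ⟩ := h
  refine ⟨T, d, T.isUnit, hd, hTP, by rwa [← coe_units_inv], ?_⟩
  rw [← hspec, diagonal_mul_diagonal, spectrum_diagonal]
  simp_rw [sq]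
end

section
/- If P solves A P + P Aᵀ = -BBᵀ with A Hurwitz and B ∈ ℝ^{N×p}, then the number of eigenvalues of P exceeding any τ > 0 can be bounded: specifically, since range(P) ⊆ range([B, AB, …, A^{N-1}B]), rank(P) ≤ min(N, p·deg(m_A)) where m_A is the minimal polynomial of A. -/
/-!
For `w` orthogonal to an `A`-invariant subspace `S` containing the columns of `B` we have
`Bᵀ w = 0`, so the Lyapunov equation gives `Pᵀ Aᵀ w = -A Pᵀ w` on the `Aᵀ`-invariant space
`S^⊥`. Hence `χ_A(-A) Pᵀ w = Pᵀ χ_A(Aᵀ) w = 0` by Cayley–Hamilton, and as `A` is Hurwitz,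
`A` and `-A` share no eigenvalue, so `χ_A(-A)` is invertible and `Pᵀ w = 0`: the range of `P`
lies in `S`. The Krylov space `span {Aᵏ bⱼ}` is such an `S`, and reducing powers of `A` modulo
the minimal polynomial shows that it is spanned by the `p · deg m_A` vectors with `k < deg m_A`.
-/

open Matrix Polynomial

section Krylov

variable {R : Type*} [CommRing R] {n p : Type*} [Fintype n] [DecidableEq n]

def krylovSubspace (A : Matrix n n R) (B : Matrix n p R) (d : ℕ) : Submodule R (n → R) :=
  Submodule.span R {v | ∃ (k : Fin d) (j : p), v = A ^ (k : ℕ) *ᵥ B.col j}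

theorem pow_mem_span_pow_lt_natDegree {S : Type*} [Ring S] [Algebra R S] {a : S} {q : R[X]}
    (hq : q.Monic) (hqa : aeval a q = 0) (k : ℕ) :
    a ^ k ∈ Submodule.span R (Set.range fun i : Fin q.natDegree => a ^ (i : ℕ)) := by
  classical
  have hmem : a ^ k ∈ Submodule.span R (Finset.image (a ^ ·) (Finset.range q.natDegree)) := by
    rw [Submodule.span_range_natDegree_eq_adjoin hq hqa]
    exact (Algebra.adjoin R {a}).pow_mem (Algebra.subset_adjoin rfl) k
  convert hmem using 3
  ext x
  simp [Fin.exists_iff]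

variable (A : Matrix n n R) (B : Matrix n p R)

theorem pow_mulVec_col_mem_krylovSubspace {q : R[X]} (hq : q.Monic) (hqA : aeval A q = 0)
    (k : ℕ) (j : p) : A ^ k *ᵥ B.col j ∈ krylovSubspace A B q.natDegree := by
  have := Submodule.apply_mem_span_image_of_mem_span ((mulVecBilin R R).flip (B.col j))
    (pow_mem_span_pow_lt_natDegree hq hqA k)
  refine Submodule.span_mono ?_ this
  rintro _ ⟨_, ⟨i, rfl⟩, rfl⟩
  exact ⟨i, j, rfl⟩

theorem krylovSubspace_le_of_aeval_eq_zero {q : R[X]} (hq : q.Monic) (hqA : aeval A q = 0)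
    (d : ℕ) :
    krylovSubspace A B d ≤ krylovSubspace A B q.natDegree :=
  Submodule.span_le.mpr fun _ ⟨k, j, hv⟩ ↦ hv ▸ pow_mulVec_col_mem_krylovSubspace A B hq hqA k j

theorem mulVec_mem_krylovSubspace {q : R[X]} (hq : q.Monic) (hqA : aeval A q = 0)
    {x : n → R} (hx : x ∈ krylovSubspace A B q.natDegree) :
    A *ᵥ x ∈ krylovSubspace A B q.natDegree := by
  refine (Submodule.span_le (p := (krylovSubspace A B q.natDegree).comap A.mulVecLin)).mpr ?_ hx
  rintro _ ⟨k, j, rfl⟩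
  rw [SetLike.mem_coe, Submodule.mem_comap, mulVecLin_apply, mulVec_mulVec, ← pow_succ']
  exact pow_mulVec_col_mem_krylovSubspace A B hq hqA _ j

theorem finrank_krylovSubspace_le [Fintype p] [StrongRankCondition R] (d : ℕ) :
    Module.finrank R (krylovSubspace A B d) ≤ Fintype.card p * d := by
  have hset : {v | ∃ (k : Fin d) (j : p), v = A ^ (k : ℕ) *ᵥ B.col j} =
      Set.range fun x : Fin d × p => A ^ (x.1 : ℕ) *ᵥ B.col x.2 := by
    ext v
    simp [eq_comm]
  have := finrank_range_le_card (R := R) fun x : Fin d × p => A ^ (x.1 : ℕ) *ᵥ B.col x.2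
  rw [Fintype.card_prod, Fintype.card_fin, mul_comm] at this
  rwa [krylovSubspace, hset]

end Krylov

theorem mulVec_aeval_of_semiconj {R m n : Type*} [CommRing R] [Fintype m] [DecidableEq m]
    [Fintype n] [DecidableEq n] (F : Matrix m n R) (G : Matrix n n R) (H : Matrix m m R)
    (W : Set (n → R)) (hGW : ∀ w ∈ W, G *ᵥ w ∈ W)
    (hF : ∀ w ∈ W, F *ᵥ (G *ᵥ w) = H *ᵥ (F *ᵥ w)) (q : R[X]) :
    ∀ w ∈ W, F *ᵥ (aeval G q *ᵥ w) = aeval H q *ᵥ (F *ᵥ w) := by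
  induction q using Polynomial.induction_on with
  | C a => intro w _; simp [Algebra.algebraMap_eq_smul_one]
  | add q r hq hr =>
    intro w hw
    simp only [map_add, add_mulVec, mulVec_add, hq w hw, hr w hw]
  | monomial k a ih =>
    intro w hw
    rw [pow_succ, ← mul_assoc, map_mul (aeval G), map_mul (aeval H), aeval_X, aeval_X,
      ← mulVec_mulVec, ih _ (hGW w hw), hF w hw, mulVec_mulVec]

theorem mem_of_forall_dotProduct_eq_zero {K n : Type*} [Field K] [Fintype n] [DecidableEq n]
    {S : Submodule K (n → K)} {v : n → K} (h : ∀ w, (∀ x ∈ S, w ⬝ᵥ x = 0) → w ⬝ᵥ v = 0) :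
    v ∈ S := by
  refine (Subspace.forall_mem_dualAnnihilator_apply_eq_zero_iff S v).mp fun φ hφ ↦ ?_
  obtain ⟨w, rfl⟩ := (dotProductEquiv K n).surjective φ
  exact h w fun x hx ↦ (Submodule.mem_dualAnnihilator _).mp hφ x hx

theorem range_mulVecLin_le_of_lyapunov {K n p : Type*} [Field K] [Fintype n] [DecidableEq n]
    [Fintype p] (A P : Matrix n n K) (B : Matrix n p K) (hA : IsUnit (aeval (-A) A.charpoly))
    (hP : A * P + P * Aᵀ = -(B * Bᵀ)) (S : Submodule K (n → K))
    (hAS : ∀ x ∈ S, A *ᵥ x ∈ S) (hBS : ∀ j, B.col j ∈ S) :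
    LinearMap.range P.mulVecLin ≤ S := by
  set W : Set (n → K) := {w | ∀ x ∈ S, w ⬝ᵥ x = 0}
  have hAW : ∀ w ∈ W, Aᵀ *ᵥ w ∈ W := fun w hw x hx ↦ by
    rw [mulVec_transpose, ← dotProduct_mulVec]
    exact hw _ (hAS x hx)
  have hBW : ∀ w ∈ W, Bᵀ *ᵥ w = 0 := fun w hw ↦ funext fun j ↦ by
    rw [mulVec_transpose]
    exact hw _ (hBS j)
  have hPW : ∀ w ∈ W, Pᵀ *ᵥ (Aᵀ *ᵥ w) = (-A) *ᵥ (Pᵀ *ᵥ w) := fun w hw ↦ by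
    have h := congrArg (fun M ↦ Mᵀ *ᵥ w) hP
    simp only [transpose_add, transpose_mul, transpose_transpose, transpose_neg, add_mulVec,
      neg_mulVec, ← mulVec_mulVec, hBW w hw, mulVec_zero, neg_zero] at h
    rw [neg_mulVec]
    exact eq_neg_of_add_eq_zero_left h
  have hPtW : ∀ w ∈ W, Pᵀ *ᵥ w = 0 := fun w hw ↦ by
    have h := mulVec_aeval_of_semiconj Pᵀ Aᵀ (-A) W hAW hPW A.charpoly w hw
    have hCH : aeval Aᵀ A.charpoly = 0 := charpoly_transpose A ▸ aeval_self_charpoly Aᵀ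
    rw [hCH, zero_mulVec, mulVec_zero] at h
    exact mulVec_injective_of_isUnit hA (h.symm.trans (mulVec_zero _).symm)
  rintro _ ⟨v, rfl⟩
  refine mem_of_forall_dotProduct_eq_zero fun w hw ↦ ?_
  rw [mulVecLin_apply, dotProduct_mulVec, ← mulVec_transpose, hPtW w hw, zero_dotProduct]

theorem isUnit_aeval_charpoly_of_disjoint_spectrum {𝕜 n : Type*} [Field 𝕜] [IsAlgClosed 𝕜]
    [Fintype n] [DecidableEq n] (M N : Matrix n n 𝕜)
    (h : Disjoint (spectrum 𝕜 M) (spectrum 𝕜 N)) : IsUnit (aeval N M.charpoly) := by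
  nontriviality Matrix n n 𝕜
  rw [← spectrum.zero_notMem_iff 𝕜, spectrum.map_polynomial_aeval_of_nonempty _ _
    (spectrum.nonempty_of_isAlgClosed_of_finiteDimensional 𝕜 N)]
  rintro ⟨μ, hμN, hμM⟩
  exact Set.disjoint_left.mp h (mem_spectrum_iff_isRoot_charpoly.mpr hμM) hμN

theorem isUnit_aeval_neg_charpoly_of_hurwitz {n : Type*} [Fintype n] [DecidableEq n]
    (A : Matrix n n ℝ) (hA : ∀ μ ∈ spectrum ℂ (A.map (algebraMap ℝ ℂ)), μ.re < 0) :
    IsUnit (aeval (-A) A.charpoly) := by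
  set Ac := A.map (algebraMap ℝ ℂ)
  have hdisj : Disjoint (spectrum ℂ Ac) (spectrum ℂ (-Ac)) := by
    refine Set.disjoint_left.mpr fun μ hμ hμneg ↦ ?_
    rw [← spectrum.neg_eq, Set.mem_neg] at hμneg
    have h₁ := hA μ hμ
    have h₂ := hA _ hμneg
    rw [Complex.neg_re] at h₂
    linarith
  have hmap : (aeval (-A) A.charpoly).map (algebraMap ℝ ℂ) = aeval (-Ac) Ac.charpoly := by
    rw [charpoly_map, aeval_map_algebraMap]
    have h := aeval_algHom_apply (AlgHom.mapMatrix (Algebra.ofId ℝ ℂ)) (-A) A.charpoly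
    rw [map_neg] at h
    exact h.symm
  have hunit := isUnit_aeval_charpoly_of_disjoint_spectrum Ac (-Ac) hdisj
  rw [← hmap, isUnit_iff_isUnit_det, ← RingHom.mapMatrix_apply, ← RingHom.map_det] at hunit
  rwa [isUnit_iff_isUnit_det, ← isUnit_map_iff (algebraMap ℝ ℂ)]

/-- Low numerical rank of the controllability Gramian: if `P` solves
`A P + P Aᵀ = -B Bᵀ` with `A` Hurwitz, then `range P` is contained in the range of the
controllability matrix `[B, AB, …, A^{N-1}B]`, and `rank P ≤ min(N, p · deg m_A)` where
`m_A` is the minimal polynomial of `A`. -/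
theorem gramian_rank_bound_min_poly {N p : ℕ}
    (A P : Matrix (Fin N) (Fin N) ℝ) (B : Matrix (Fin N) (Fin p) ℝ)
    (hA : ∀ μ ∈ spectrum ℂ (A.map (algebraMap ℝ ℂ)), μ.re < 0)
    (hP : A * P + P * Aᵀ = -(B * Bᵀ)) :
    LinearMap.range P.mulVecLin ≤
        Submodule.span ℝ
          {v | ∃ (k : Fin N) (j : Fin p), v = (A ^ (k : ℕ)).mulVec fun i => B i j} ∧
      P.rank ≤ min N (p * (minpoly ℝ A).natDegree) := by
  have hχ : A.charpoly.natDegree = N := by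
    rw [charpoly_natDegree_eq_dim, Fintype.card_fin]
  have hK : LinearMap.range P.mulVecLin ≤ krylovSubspace A B N := by
    refine le_of_le_of_eq ?_ (congrArg (krylovSubspace A B) hχ)
    refine range_mulVecLin_le_of_lyapunov A P B (isUnit_aeval_neg_charpoly_of_hurwitz A hA) hP _
      (fun _ ↦ mulVec_mem_krylovSubspace A B A.charpoly_monic A.aeval_self_charpoly)
      fun j ↦ ?_
    simpa using pow_mulVec_col_mem_krylovSubspace A B A.charpoly_monic A.aeval_self_charpoly 0 j
  have hm := minpoly.monic (IsIntegral.of_finite ℝ A)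
  refine ⟨hK, le_min (rank_le_height P) ?_⟩
  calc P.rank ≤ Module.finrank ℝ (krylovSubspace A B N) := Submodule.finrank_mono hK
    _ ≤ Module.finrank ℝ (krylovSubspace A B (minpoly ℝ A).natDegree) :=
      Submodule.finrank_mono (krylovSubspace_le_of_aeval_eq_zero A B hm (minpoly.aeval ℝ A) N)
    _ ≤ p * (minpoly ℝ A).natDegree := by
      simpa using finrank_krylovSubspace_le A B (minpoly ℝ A).natDegree
end
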